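/- arXiv:2207.03518 — 10 statements merged into one kernel-verified Lean document; each statement's English description precedes it below -/
import Mathlib

section
/- Let G be a bipartite graph with vertex parts L(G) and R(G) and let k be a positive integer. Consider the approval election whose set of voters is L(G) and whose set of candidates is R(G) together with max(|L(G)|−|R(G)|, 0) additional candidates approved by no voter, where a voter ℓ ∈ L(G) approves a candidate r ∈ R(G) if and only if ℓ and r are adjacent in G. Then, for committee size k' = |L(G)|, this election contains a k-cohesive group if and only if G contains a k-biclique, i.e., sets L' ⊆ L(G) and R' ⊆ R(G) with |L'| = |R'| = k such that every vertex of L' is adjacent to every vertex of R'. -/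
open Finset

/-- `X` is an `ℓ`-cohesive group in the approval election with voter type `V`,
candidate type `C`, approval function `A`, `n` voters and committee size `k`:
`|X| ≥ ℓ·n/k` and at least `ℓ` candidates are approved by every member of `X`. -/
def IsCohesive {V C : Type*} [Fintype C] [DecidableEq C]
    (A : V → Finset C) (n k ℓ : ℕ) (X : Finset V) : Prop :=
  (ℓ : ℝ) * n / k ≤ X.card ∧
    ℓ ≤ (Finset.univ.filter (fun c : C => ∀ v ∈ X, c ∈ A v)).card

theorem isCohesive_self_iff {V C : Type*} [Fintype C] [DecidableEq C] (A : V → Finset C)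
    {n : ℕ} (hn : n ≠ 0) (ℓ : ℕ) (X : Finset V) :
    IsCohesive A n n ℓ X ↔ ℓ ≤ #X ∧ ℓ ≤ #(univ.filter fun c => ∀ v ∈ X, c ∈ A v) := by
  have hn' : (n : ℝ) ≠ 0 := by exact_mod_cast hn
  rw [IsCohesive, mul_div_assoc, div_self hn', mul_one, Nat.cast_le]

section Biclique

variable {L R : Type*} [Fintype R] (Adj : L → R → Prop) [∀ l r, Decidable (Adj l r)]

def commonNeighbors (X : Finset L) : Finset R := univ.filter fun r => ∀ l ∈ X, Adj l r

theorem exists_biclique_iff (k : ℕ) :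
    (∃ (L' : Finset L) (R' : Finset R), #L' = k ∧ #R' = k ∧ ∀ l ∈ L', ∀ r ∈ R', Adj l r) ↔
      ∃ X : Finset L, k ≤ #X ∧ k ≤ #(commonNeighbors Adj X) := by
  constructor
  · rintro ⟨L', R', hL', hR', hadj⟩
    refine ⟨L', hL'.ge, hR' ▸ card_le_card fun r hr => ?_⟩
    exact mem_filter.mpr ⟨mem_univ r, fun l hl => hadj l hl r hr⟩
  · rintro ⟨X, hX, hN⟩
    obtain ⟨L', hL'X, hL'⟩ := exists_subset_card_eq hX
    obtain ⟨R', hR'N, hR'⟩ := exists_subset_card_eq hN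
    exact ⟨L', R', hL', hR', fun l hl r hr => (mem_filter.mp (hR'N hr)).2 l (hL'X hl)⟩

-- The padding candidates in `P` are approved by nobody, so only the empty group approves them.
theorem filter_forall_mem_eq_map_inl {P : Type*} [Fintype P] [DecidableEq R] [DecidableEq P]
    {A : L → Finset (R ⊕ P)}
    (hA : ∀ l, A l = univ.filter fun c => ∃ r, c = Sum.inl r ∧ Adj l r)
    {X : Finset L} (hX : X.Nonempty) :
    univ.filter (fun c => ∀ l ∈ X, c ∈ A l) = (commonNeighbors Adj X).map .inl := by
  ext (r | p)
  · simp [hA, commonNeighbors]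
  · obtain ⟨l, hl⟩ := hX
    simpa [hA] using ⟨l, hl⟩

end Biclique

theorem stmt0_general {L R : Type*} [Fintype L] [Fintype R] [DecidableEq R]
    [Nonempty L]
    (Adj : L → R → Prop) [∀ l r, Decidable (Adj l r)] (k : ℕ) (hk : 0 < k)
    (A : L → Finset (R ⊕ Fin (Fintype.card L - Fintype.card R)))
    (hA : ∀ l : L, A l = (Finset.univ : Finset (R ⊕ Fin (Fintype.card L - Fintype.card R))).filter
      (fun c => ∃ r : R, c = Sum.inl r ∧ Adj l r)) :
    (∃ X : Finset L, IsCohesive A (Fintype.card L) (Fintype.card L) k X) ↔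
      ∃ (L' : Finset L) (R' : Finset R), L'.card = k ∧ R'.card = k ∧
        ∀ l ∈ L', ∀ r ∈ R', Adj l r := by
  rw [exists_biclique_iff]
  refine exists_congr fun X => ?_
  rw [isCohesive_self_iff A Fintype.card_ne_zero]
  refine and_congr_right fun hX => ?_
  rw [filter_forall_mem_eq_map_inl Adj hA (card_pos.mp (hk.trans_le hX)), card_map]

theorem stmt0 {L R : Type*} [Fintype L] [Fintype R] [DecidableEq L] [DecidableEq R]
    [Nonempty L]
    (Adj : L → R → Prop) [∀ l r, Decidable (Adj l r)] (k : ℕ) (hk : 0 < k)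
    (A : L → Finset (R ⊕ Fin (Fintype.card L - Fintype.card R)))
    (hA : ∀ l : L, A l = (Finset.univ : Finset (R ⊕ Fin (Fintype.card L - Fintype.card R))).filter
      (fun c => ∃ r : R, c = Sum.inl r ∧ Adj l r)) :
    (∃ X : Finset L, IsCohesive A (Fintype.card L) (Fintype.card L) k X) ↔
      ∃ (L' : Finset L) (R' : Finset R), L'.card = k ∧ R'.card = k ∧
        ∀ l ∈ L', ∀ r ∈ R', Adj l r :=
  stmt0_general Adj k hk A hA
end

section
/- Let E be an approval election with n voters and m candidates, let k be a committee size, let ℓ be a positive integer with ℓ ≤ m, and let x be an integer with ℓ·n/k ≤ x ≤ n. Form the election E' by adding to E exactly n·x·(x+1) − n new voters who approve no candidates and n·x·(x+1)·m − m new candidates approved by no voter (so E' has n' = n·x·(x+1) voters and m' = n·x·(x+1)·m candidates), and set k₁' = ℓ·n·x and k₂' = ℓ·n·(x+1). Then the number of ℓ-cohesive groups of size exactly x in E with respect to committee size k equals the number of ℓ-cohesive groups in E' with respect to committee size k₂' minus the number of ℓ-cohesive groups in E' with respect to committee size k₁'. -/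
/-- Number of candidates approved by every member of `X`. -/
def fcnt {V C : Type*} [Fintype C] [DecidableEq C]
    (A : V → Finset C) (X : Finset V) : ℕ :=
  (Finset.univ.filter (fun c : C => ∀ v ∈ X, c ∈ A v)).card

lemma isCohesive_iff {V C : Type*} [Fintype C] [DecidableEq C]
    (A : V → Finset C) (n k ℓ : ℕ) (X : Finset V) :
    IsCohesive A n k ℓ X ↔ ((ℓ : ℝ) * n / k ≤ X.card ∧ ℓ ≤ fcnt A X) := Iff.rfl

/-- The filter count is preserved under embedding voters and candidates. -/
lemma fcnt_map {V V' C C' : Type*} [Fintype C] [DecidableEq C] [Fintype C'] [DecidableEq C']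
    (A : V → Finset C) (A' : V' → Finset C') (eV : V ↪ V') (eC : C ↪ C')
    (h1 : ∀ v, A' (eV v) = (A v).map eC) (Y : Finset V) (hY : Y.Nonempty) :
    fcnt A' (Y.map eV) = fcnt A Y := by
  unfold fcnt
  have hset : (Finset.univ.filter (fun c' : C' => ∀ v ∈ Y.map eV, c' ∈ A' v)) =
      (Finset.univ.filter (fun c : C => ∀ v ∈ Y, c ∈ A v)).map eC := by
    ext c'
    rw [Finset.mem_filter, Finset.mem_map]
    constructor
    · rintro ⟨-, h⟩
      obtain ⟨u, hu⟩ := hY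
      have h2 := h _ (Finset.mem_map_of_mem eV hu)
      rw [h1] at h2
      obtain ⟨c, hc, rfl⟩ := Finset.mem_map.mp h2
      refine ⟨c, Finset.mem_filter.mpr ⟨Finset.mem_univ _, ?_⟩, rfl⟩
      intro w hw
      have h3 := h _ (Finset.mem_map_of_mem eV hw)
      rw [h1] at h3
      obtain ⟨c₂, hc₂, heq⟩ := Finset.mem_map.mp h3
      have hcc : c₂ = c := eC.injective heq
      subst hcc; exact hc₂
    · rintro ⟨c, hc, rfl⟩
      rw [Finset.mem_filter] at hc
      refine ⟨Finset.mem_univ _, ?_⟩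
      intro v hv
      obtain ⟨u, hu, rfl⟩ := Finset.mem_map.mp hv
      rw [h1]
      exact Finset.mem_map_of_mem eC (hc.2 u hu)
  rw [hset, Finset.card_map]

/-- A group containing a voter who approves nobody has filter count zero. -/
lemma fcnt_eq_zero {V C : Type*} [Fintype C] [DecidableEq C]
    (A : V → Finset C) (X : Finset V) (v : V) (hv : v ∈ X) (hAv : A v = ∅) :
    fcnt A X = 0 := by
  unfold fcnt
  rw [Finset.card_eq_zero]
  ext c
  rw [Finset.mem_filter]
  simp only [Finset.notMem_empty, iff_false, not_and]
  intro _ h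
  have h2 := h v hv
  rw [hAv] at h2
  simp at h2

theorem stmt5 (n m k ℓ x : ℕ) (hn : 0 < n) (hk : 0 < k) (hℓ : 0 < ℓ) (hℓm : ℓ ≤ m)
    (hx1 : (ℓ : ℝ) * n / k ≤ x) (hx2 : x ≤ n)
    (A : Fin n → Finset (Fin m))
    (A' : Fin n ⊕ Fin (n * x * (x + 1) - n) → Finset (Fin m ⊕ Fin (n * x * (x + 1) * m - m)))
    (hA'1 : ∀ v : Fin n, A' (Sum.inl v) = (A v).map ⟨Sum.inl, Sum.inl_injective⟩)
    (hA'2 : ∀ w, A' (Sum.inr w) = ∅) :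
    {X : Finset (Fin n) | IsCohesive A n k ℓ X ∧ X.card = x}.ncard =
      {X : Finset (Fin n ⊕ Fin (n * x * (x + 1) - n)) |
          IsCohesive A' (n * x * (x + 1)) (ℓ * n * (x + 1)) ℓ X}.ncard -
        {X : Finset (Fin n ⊕ Fin (n * x * (x + 1) - n)) |
          IsCohesive A' (n * x * (x + 1)) (ℓ * n * x) ℓ X}.ncard := by
  have hx0 : 0 < x := by
    by_contra h
    push_neg at h
    interval_cases x
    have h1 : (0:ℝ) < (ℓ:ℝ) * n / k := by positivity
    simp only [Nat.cast_zero] at hx1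
    linarith
  -- threshold computations
  have hcast2 : ((ℓ:ℝ) * (↑(n * x * (x + 1)) : ℝ)) / (↑(ℓ * n * (x + 1)) : ℝ) = (x:ℝ) := by
    have hℓ' : (ℓ:ℝ) ≠ 0 := Nat.cast_ne_zero.mpr hℓ.ne'
    have hn' : (n:ℝ) ≠ 0 := Nat.cast_ne_zero.mpr hn.ne'
    have hx' : (x:ℝ) + 1 ≠ 0 := by positivity
    push_cast
    field_simp
  have hcast1 : ((ℓ:ℝ) * (↑(n * x * (x + 1)) : ℝ)) / (↑(ℓ * n * x) : ℝ) = (x:ℝ) + 1 := by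
    have hℓ' : (ℓ:ℝ) ≠ 0 := Nat.cast_ne_zero.mpr hℓ.ne'
    have hn' : (n:ℝ) ≠ 0 := Nat.cast_ne_zero.mpr hn.ne'
    have hx' : (x:ℝ) ≠ 0 := Nat.cast_ne_zero.mpr hx0.ne'
    push_cast
    field_simp
  have hco2 : ∀ X : Finset (Fin n ⊕ Fin (n * x * (x + 1) - n)),
      IsCohesive A' (n * x * (x + 1)) (ℓ * n * (x + 1)) ℓ X ↔ (x ≤ X.card ∧ ℓ ≤ fcnt A' X) := by
    intro X
    rw [isCohesive_iff, hcast2]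
    constructor
    · rintro ⟨h1, h2⟩; exact ⟨by exact_mod_cast h1, h2⟩
    · rintro ⟨h1, h2⟩; exact ⟨by exact_mod_cast h1, h2⟩
  have hco1 : ∀ X : Finset (Fin n ⊕ Fin (n * x * (x + 1) - n)),
      IsCohesive A' (n * x * (x + 1)) (ℓ * n * x) ℓ X ↔ (x + 1 ≤ X.card ∧ ℓ ≤ fcnt A' X) := by
    intro X
    rw [isCohesive_iff, hcast1]
    constructor
    · rintro ⟨h1, h2⟩
      refine ⟨?_, h2⟩
      have h3 : ((x:ℝ) + 1) ≤ (X.card : ℝ) := h1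
      exact_mod_cast h3
    · rintro ⟨h1, h2⟩
      refine ⟨?_, h2⟩
      have h3 : ((x + 1 : ℕ) : ℝ) ≤ (X.card : ℝ) := Nat.cast_le.mpr h1
      push_cast at h3
      linarith
  have hnodummy : ∀ X : Finset (Fin n ⊕ Fin (n * x * (x + 1) - n)),
      ℓ ≤ fcnt A' X → ∀ s ∈ X, ∃ v : Fin n, s = Sum.inl v := by
    intro X hX s hs
    cases s with
    | inl v => exact ⟨v, rfl⟩
    | inr w =>
      exfalso
      rw [fcnt_eq_zero A' X (Sum.inr w) hs (hA'2 w)] at hX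
      omega
  -- set identifications
  have hS2 : {X : Finset (Fin n ⊕ Fin (n * x * (x + 1) - n)) |
      IsCohesive A' (n * x * (x + 1)) (ℓ * n * (x + 1)) ℓ X}
      = {X | x ≤ X.card ∧ ℓ ≤ fcnt A' X} := by
    ext X; exact hco2 X
  have hS1 : {X : Finset (Fin n ⊕ Fin (n * x * (x + 1) - n)) |
      IsCohesive A' (n * x * (x + 1)) (ℓ * n * x) ℓ X}
      = {X | x + 1 ≤ X.card ∧ ℓ ≤ fcnt A' X} := by
    ext X; exact hco1 X
  rw [hS2, hS1]
  have hsub : {X : Finset (Fin n ⊕ Fin (n * x * (x + 1) - n)) |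
        x + 1 ≤ X.card ∧ ℓ ≤ fcnt A' X}
      ⊆ {X | x ≤ X.card ∧ ℓ ≤ fcnt A' X} := by
    rintro X ⟨h1, h2⟩; exact ⟨by omega, h2⟩
  rw [← Set.ncard_diff hsub (Set.toFinite _)]
  have hdiff : {X : Finset (Fin n ⊕ Fin (n * x * (x + 1) - n)) |
        x ≤ X.card ∧ ℓ ≤ fcnt A' X} \ {X | x + 1 ≤ X.card ∧ ℓ ≤ fcnt A' X}
      = {X | X.card = x ∧ ℓ ≤ fcnt A' X} := by
    ext X
    simp only [Set.mem_diff, Set.mem_setOf_eq, not_and, not_le]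
    constructor
    · rintro ⟨⟨h1, h2⟩, h3⟩
      refine ⟨?_, h2⟩
      by_contra h
      have := h3 (by omega)
      omega
    · rintro ⟨h1, h2⟩
      exact ⟨⟨h1.ge, h2⟩, fun h => by omega⟩
  rw [hdiff]
  have hLHS : {X : Finset (Fin n) | IsCohesive A n k ℓ X ∧ X.card = x}
      = {X : Finset (Fin n) | X.card = x ∧ ℓ ≤ fcnt A X} := by
    ext X
    simp only [Set.mem_setOf_eq, isCohesive_iff]
    constructor
    · rintro ⟨⟨_, h2⟩, h3⟩; exact ⟨h3, h2⟩
    · rintro ⟨h1, h2⟩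
      refine ⟨⟨?_, h2⟩, h1⟩
      rw [h1]; exact hx1
  rw [hLHS]
  -- bijection via mapping with Sum.inl
  have himg : {X : Finset (Fin n ⊕ Fin (n * x * (x + 1) - n)) | X.card = x ∧ ℓ ≤ fcnt A' X}
      = (fun Y : Finset (Fin n) => Y.map ⟨Sum.inl, Sum.inl_injective⟩) ''
          {X : Finset (Fin n) | X.card = x ∧ ℓ ≤ fcnt A X} := by
    ext X
    simp only [Set.mem_image, Set.mem_setOf_eq]
    constructor
    · rintro ⟨h1, h2⟩
      have hall := hnodummy X h2
      have hXY : X = (X.preimage Sum.inl (Sum.inl_injective.injOn)).map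
          ⟨Sum.inl, Sum.inl_injective⟩ := by
        ext s
        cases s with
        | inl v =>
          simp only [Finset.mem_map, Finset.mem_preimage, Function.Embedding.coeFn_mk]
          constructor
          · intro h; exact ⟨v, h, rfl⟩
          · rintro ⟨v₀, hv₀, heq⟩
            have hvv : v₀ = v := Sum.inl_injective heq
            subst hvv; exact hv₀
        | inr w =>
          simp only [Finset.mem_map, Function.Embedding.coeFn_mk]
          constructor
          · intro h
            obtain ⟨v, hv⟩ := hall _ h
            simp at hv
          · rintro ⟨v₀, _, heq⟩
            simp at heq
      have hYcard : (X.preimage Sum.inl (Sum.inl_injective.injOn)).card = x := by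
        rw [hXY, Finset.card_map] at h1; exact h1
      have hYne : (X.preimage Sum.inl (Sum.inl_injective.injOn)).Nonempty :=
        Finset.card_pos.mp (by omega)
      refine ⟨_, ⟨hYcard, ?_⟩, hXY.symm⟩
      rw [← fcnt_map A A' ⟨Sum.inl, Sum.inl_injective⟩ ⟨Sum.inl, Sum.inl_injective⟩ hA'1 _ hYne, ← hXY]
      exact h2
    · rintro ⟨Y, ⟨h1, h2⟩, rfl⟩
      have hYne : Y.Nonempty := Finset.card_pos.mp (by omega)
      refine ⟨by simp [h1], ?_⟩
      rw [fcnt_map A A' ⟨Sum.inl, Sum.inl_injective⟩ ⟨Sum.inl, Sum.inl_injective⟩ hA'1 Y hYne]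
      exact h2
  rw [himg, Set.ncard_image_of_injective _
    (fun a b hab => Finset.map_injective ⟨Sum.inl, Sum.inl_injective⟩ hab)]
end

section
/- Let U = {u_1, …, u_n} be a finite universe and let 𝒮 = {S_1, …, S_m} be a family of subsets of U. Consider the approval election whose voters are S_1, …, S_m and whose candidates are u_1, …, u_n together with max(m−n, 0) additional candidates approved by no voter, where voter S_j approves candidate u_i if and only if u_i ∉ S_j, with committee size k' = m. Then for every nonempty subfamily T ⊆ 𝒮: the union of the sets in T equals U if and only if T, viewed as a group of voters, is not a 1-cohesive group of this election. -/
theorem stmt6 {U : Type*} [Fintype U] [DecidableEq U] (m : ℕ)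
    (S : Fin m → Finset U)
    (A : Fin m → Finset (U ⊕ Fin (m - Fintype.card U)))
    (hA : ∀ j : Fin m, A j = (Finset.univ : Finset (U ⊕ Fin (m - Fintype.card U))).filter
      (fun c => ∃ u : U, c = Sum.inl u ∧ u ∉ S j)) :
    ∀ T : Finset (Fin m), T.Nonempty →
      (T.biUnion S = Finset.univ ↔ ¬ IsCohesive A m m 1 T) := by
  intro T hT
  obtain ⟨j0, hj0⟩ := hT
  have hm : 0 < m := j0.pos
  constructor
  · intro hU hc
    obtain ⟨-, hcard⟩ := hc
    rw [Finset.one_le_card] at hcard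
    obtain ⟨c, hc⟩ := hcard
    simp only [Finset.mem_filter] at hc
    obtain ⟨-, hall⟩ := hc
    have h0 := hall j0 hj0
    simp only [hA j0, Finset.mem_filter] at h0
    obtain ⟨-, u, rfl, -⟩ := h0
    have hu : u ∈ T.biUnion S := hU ▸ Finset.mem_univ u
    obtain ⟨i, hi, hui⟩ := Finset.mem_biUnion.1 hu
    have h1 := hall i hi
    simp only [hA i, Finset.mem_filter] at h1
    obtain ⟨-, u', heq, hu'⟩ := h1
    cases Sum.inl.inj heq
    exact hu' hui
  · intro hnc
    by_contra hU
    apply hnc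
    constructor
    · have h1 : (1:ℝ) ≤ T.card := by exact_mod_cast Finset.one_le_card.2 ⟨j0, hj0⟩
      have h2 : (1:ℝ) * m / m = 1 := by
        field_simp
      rw [Nat.cast_one, h2]; exact h1
    · rw [Finset.one_le_card]
      have : ∃ u : U, u ∉ T.biUnion S := by
        by_contra h
        push_neg at h
        exact hU (Finset.eq_univ_of_forall h)
      obtain ⟨u, hu⟩ := this
      refine ⟨Sum.inl u, ?_⟩
      simp only [Finset.mem_filter]
      refine ⟨Finset.mem_univ _, fun v hv => ?_⟩
      simp only [hA v, Finset.mem_filter]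
      exact ⟨Finset.mem_univ _, u, rfl, fun huv => hu (Finset.mem_biUnion.2 ⟨v, hv, huv⟩)⟩
end

section
/- Let U = {u_1, …, u_n} be a finite universe, let 𝒮 = {S_1, …, S_m} be a family of subsets of U, and let k be a positive integer. Consider the approval election whose voters are S_1, …, S_m and whose candidates are u_1, …, u_n together with max(m−n, 0) additional candidates approved by no voter, where voter S_j approves candidate u_i if and only if u_i ∉ S_j, with committee size k' = m. Then the number of subfamilies of 𝒮 of size at most k whose union equals U is Σ_{x=1}^{k} ( C(m, x) − N_x ), where N_x denotes the number of 1-cohesive groups of size exactly x in this election and C(m, x) is the binomial coefficient. -/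
theorem stmt7 {U : Type*} [Fintype U] [DecidableEq U] (m k : ℕ) (hk : 0 < k)
    (S : Fin m → Finset U)
    (A : Fin m → Finset (U ⊕ Fin (m - Fintype.card U)))
    (hA : ∀ j : Fin m, A j = (Finset.univ : Finset (U ⊕ Fin (m - Fintype.card U))).filter
      (fun c => ∃ u : U, c = Sum.inl u ∧ u ∉ S j)) :
    {T : Finset (Fin m) | 1 ≤ T.card ∧ T.card ≤ k ∧ T.biUnion S = Finset.univ}.ncard =
      ∑ x ∈ Finset.Icc 1 k,
        (Nat.choose m x - {T : Finset (Fin m) | IsCohesive A m m 1 T ∧ T.card = x}.ncard) := by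
  haveI instC : DecidablePred (fun T : Finset (Fin m) => IsCohesive A m m 1 T) :=
    fun _ => Classical.dec _
  have hconv : ∀ (P : Finset (Fin m) → Prop) [DecidablePred P],
      {T : Finset (Fin m) | P T}.ncard = (Finset.univ.filter P).card := by
    intro P _
    rw [← Set.ncard_coe_finset]
    congr 1
    ext T
    simp
  simp only [hconv]
  rcases Nat.eq_zero_or_pos m with hm | hm
  · subst hm
    have hL : (Finset.univ.filter fun T : Finset (Fin 0) =>
        1 ≤ T.card ∧ T.card ≤ k ∧ T.biUnion S = Finset.univ) = ∅ := by
      ext T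
      simp only [Finset.mem_filter, Finset.mem_univ, true_and, Finset.notMem_empty, iff_false]
      rintro ⟨h1, _, _⟩
      have : T.card ≤ 0 := le_trans (Finset.card_le_univ T) (by simp)
      omega
    rw [hL, Finset.card_empty]
    symm
    apply Finset.sum_eq_zero
    intro x hx
    obtain ⟨hx1, _⟩ := Finset.mem_Icc.mp hx
    rw [Nat.choose_eq_zero_of_lt (by omega)]
    simp
  · -- main case m > 0
    have key : ∀ x : ℕ, 1 ≤ x → ∀ T : Finset (Fin m),
        (IsCohesive A m m 1 T ∧ T.card = x) ↔ (T.card = x ∧ ¬ T.biUnion S = Finset.univ) := by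
      intro x hx1 T
      constructor
      · rintro ⟨⟨hcard, hfil⟩, hxc⟩
        refine ⟨hxc, ?_⟩
        obtain ⟨c, hc⟩ := Finset.card_pos.mp hfil
        have hcprop : ∀ v ∈ T, c ∈ A v := by
          simp only [Finset.mem_filter] at hc
          exact hc.2
        have hT : T.Nonempty := Finset.card_pos.mp (by omega)
        obtain ⟨v0, hv0⟩ := hT
        have hc0 := hcprop v0 hv0
        rw [hA v0, Finset.mem_filter] at hc0
        obtain ⟨-, u, rfl, -⟩ := hc0
        intro hun
        have hu : u ∈ T.biUnion S := hun ▸ Finset.mem_univ u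
        obtain ⟨j, hj, hju⟩ := Finset.mem_biUnion.mp hu
        have hcj := hcprop j hj
        rw [hA j, Finset.mem_filter] at hcj
        obtain ⟨-, u', hu', hnu⟩ := hcj
        have : u = u' := Sum.inl.inj hu'
        exact hnu (this ▸ hju)
      · rintro ⟨hxc, hun⟩
        refine ⟨⟨?_, ?_⟩, hxc⟩
        · have hmne : (m : ℝ) ≠ 0 := Nat.cast_ne_zero.mpr (by omega)
          rw [Nat.cast_one, one_mul, div_self hmne]
          exact_mod_cast (by omega : 1 ≤ T.card)
        · obtain ⟨u, hu⟩ : ∃ u : U, u ∉ T.biUnion S := by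
            by_contra h
            push_neg at h
            exact hun (by ext u; simp [h u])
          rw [Finset.one_le_card]
          refine ⟨Sum.inl u, ?_⟩
          simp only [Finset.mem_filter, Finset.mem_univ, true_and]
          intro v hv
          rw [hA v, Finset.mem_filter]
          exact ⟨Finset.mem_univ _, u, rfl,
            fun hs => hu (Finset.mem_biUnion.mpr ⟨v, hv, hs⟩)⟩
    rw [Finset.card_eq_sum_card_fiberwise
      (f := fun T : Finset (Fin m) => T.card) (t := Finset.Icc 1 k)
      (fun T hT => by
        obtain ⟨h1, h2, _⟩ := (Finset.mem_filter.mp hT).2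
        exact Finset.mem_Icc.mpr ⟨h1, h2⟩)]
    apply Finset.sum_congr rfl
    intro x hx
    obtain ⟨hx1, hxk⟩ := Finset.mem_Icc.mp hx
    have h1 : ((Finset.univ.filter fun T : Finset (Fin m) =>
          1 ≤ T.card ∧ T.card ≤ k ∧ T.biUnion S = Finset.univ).filter
            (fun T => T.card = x))
        = Finset.univ.filter (fun T => T.card = x ∧ T.biUnion S = Finset.univ) := by
      ext T
      simp only [Finset.mem_filter, Finset.mem_univ, true_and]
      constructor
      · rintro ⟨⟨_, _, h⟩, hc⟩; exact ⟨hc, h⟩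
      · rintro ⟨hc, h⟩; exact ⟨⟨by omega, by omega, h⟩, hc⟩
    rw [h1]
    have h2 : Finset.univ.filter (fun T : Finset (Fin m) => IsCohesive A m m 1 T ∧ T.card = x)
        = Finset.univ.filter (fun T => T.card = x ∧ ¬ T.biUnion S = Finset.univ) := by
      ext T
      simp only [Finset.mem_filter, Finset.mem_univ, true_and]
      exact key x hx1 T
    rw [h2]
    have h3c : (Finset.univ.filter (fun T : Finset (Fin m) => T.card = x)).card
        = m.choose x := by
      rw [show Finset.univ.filter (fun T : Finset (Fin m) => T.card = x)
            = Finset.powersetCard x Finset.univ by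
          rw [Finset.powersetCard_eq_filter, Finset.powerset_univ],
        Finset.card_powersetCard, Finset.card_univ, Fintype.card_fin]
    have h4 : (Finset.univ.filter
          (fun T : Finset (Fin m) => T.card = x ∧ T.biUnion S = Finset.univ)).card
        + (Finset.univ.filter
          (fun T : Finset (Fin m) => T.card = x ∧ ¬ T.biUnion S = Finset.univ)).card
        = m.choose x := by
      rw [← h3c, ← Finset.card_union_of_disjoint (by
        rw [Finset.disjoint_left]
        intro T hT hT'
        simp only [Finset.mem_filter] at hT hT'
        tauto)]
      congr 1
      ext T
      simp only [Finset.mem_filter, Finset.mem_union, Finset.mem_univ, true_and]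
      tauto
    omega
end

section
/- Let E be an approval election with n voters, let k be the committee size, and let W be a committee of size k. For each candidate c with |A(c)| ≥ ⌈n/k⌉, let sat(c) denote the average satisfaction with W of the ⌈n/k⌉ voters of A(c) that are least satisfied with W. If at least one candidate c satisfies |A(c)| ≥ ⌈n/k⌉, then the minimum, over all 1-cohesive groups X of E, of the average satisfaction of X with W equals the minimum of sat(c) over all candidates c with |A(c)| ≥ ⌈n/k⌉. -/
/-- The average satisfaction of the group of voters `X` with the committee `W`. -/
noncomputable def avgSat {V C : Type*} [DecidableEq C]
    (A : V → Finset C) (W : Finset C) (X : Finset V) : ℝ :=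
  (∑ v ∈ X, ((A v ∩ W).card : ℝ)) / X.card

lemma min_avg_subset {V : Type*} [DecidableEq V] (f : V → ℝ) (hf : ∀ v, 0 ≤ f v)
    (X : Finset V) (s : ℕ) (hs : s ≤ X.card) :
    ∃ Y ⊆ X, Y.card = s ∧ (∑ v ∈ Y, f v) / s ≤ (∑ v ∈ X, f v) / X.card := by
  rcases Nat.eq_zero_or_pos s with hs0 | hspos
  · refine ⟨∅, Finset.empty_subset _, by simp [hs0], ?_⟩
    simp only [Finset.sum_empty, hs0, Nat.cast_zero, div_zero]
    exact div_nonneg (Finset.sum_nonneg fun v _ => hf v) (Nat.cast_nonneg _)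
  · have hXpos : 0 < X.card := lt_of_lt_of_le hspos hs
    obtain ⟨Y, hYmem, hmin⟩ := (X.powersetCard s).exists_min_image (fun Y => ∑ v ∈ Y, f v)
      (Finset.powersetCard_nonempty.mpr hs)
    rw [Finset.mem_powersetCard] at hYmem
    obtain ⟨hYX, hYcard⟩ := hYmem
    -- each outside element dominates the average of Y
    have hout : ∀ x ∈ X \ Y, (∑ v ∈ Y, f v) ≤ s * f x := by
      intro x hx
      rw [Finset.mem_sdiff] at hx
      have hpt : ∀ y ∈ Y, f y ≤ f x := by
        intro y hy
        have hxe : x ∉ Y.erase y := fun h => hx.2 (Finset.mem_of_mem_erase h)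
        have hY' : insert x (Y.erase y) ∈ X.powersetCard s := by
          rw [Finset.mem_powersetCard]
          constructor
          · intro z hz
            rcases Finset.mem_insert.mp hz with rfl | hz
            · exact hx.1
            · exact hYX (Finset.mem_of_mem_erase hz)
          · rw [Finset.card_insert_of_notMem hxe, Finset.card_erase_of_mem hy, hYcard,
              Nat.sub_add_cancel hspos]
        have := hmin _ hY'
        rw [Finset.sum_insert hxe] at this
        have herase : ∑ v ∈ Y.erase y, f v = (∑ v ∈ Y, f v) - f y := by
          rw [← Finset.sum_erase_add Y f hy]; ring
        rw [herase] at this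
        linarith
      calc ∑ v ∈ Y, f v ≤ ∑ v ∈ Y, f x := Finset.sum_le_sum hpt
        _ = s * f x := by rw [Finset.sum_const, hYcard, nsmul_eq_mul]
    have hsum : (∑ v ∈ X \ Y, f v) + (∑ v ∈ Y, f v) = ∑ v ∈ X, f v :=
      Finset.sum_sdiff hYX
    have hlower : ((X.card : ℝ) - s) * ((∑ v ∈ Y, f v) / s) ≤ ∑ v ∈ X \ Y, f v := by
      have h1 : ∀ x ∈ X \ Y, (∑ v ∈ Y, f v) / s ≤ f x := by
        intro x hx
        rw [div_le_iff₀ (by exact_mod_cast hspos)]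
        have := hout x hx; linarith
      have h2 := Finset.sum_le_sum h1
      rw [Finset.sum_const, Finset.card_sdiff_of_subset hYX, hYcard, nsmul_eq_mul] at h2
      have : ((X.card - s : ℕ) : ℝ) = (X.card : ℝ) - s := by
        push_cast [hs]; ring
      rw [this] at h2
      exact h2
    refine ⟨Y, hYX, hYcard, ?_⟩
    rw [div_le_div_iff₀ (by exact_mod_cast hspos) (by exact_mod_cast hXpos)]
    have hspos' : (0:ℝ) < s := by exact_mod_cast hspos
    have h3 := mul_le_mul_of_nonneg_right hlower hspos'.le
    rw [mul_assoc, div_mul_cancel₀ _ hspos'.ne'] at h3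
    nlinarith [h3, hsum]

theorem stmt8 {V C : Type*} [Fintype V] [Fintype C] [DecidableEq V] [DecidableEq C]
    (A : V → Finset C) (k : ℕ) (hk : 0 < k) (W : Finset C) (hW : W.card = k)
    (s : ℕ) (hs : s = ⌈(Fintype.card V : ℝ) / k⌉₊)
    (hex : ∃ c : C, s ≤ (Finset.univ.filter (fun v => c ∈ A v)).card) :
    ∃ μ : ℝ,
      IsLeast {q : ℝ | ∃ X : Finset V,
        IsCohesive A (Fintype.card V) k 1 X ∧ avgSat A W X = q} μ ∧
      IsLeast {q : ℝ | ∃ c : C, s ≤ (Finset.univ.filter (fun v => c ∈ A v)).card ∧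
        IsLeast {r : ℝ | ∃ Y ⊆ Finset.univ.filter (fun v => c ∈ A v),
          Y.card = s ∧ avgSat A W Y = r} q} μ := by
  classical
  set n := Fintype.card V with hn
  -- the collection of all "candidate sets" of size s contained in some big approval set
  set T : Finset (Finset V) := Finset.univ.filter (fun Y : Finset V => Y.card = s ∧
    ∃ c : C, s ≤ (Finset.univ.filter (fun v => c ∈ A v)).card ∧
      Y ⊆ Finset.univ.filter (fun v => c ∈ A v)) with hT
  have hmemT : ∀ Y : Finset V, Y ∈ T ↔ Y.card = s ∧
      ∃ c : C, s ≤ (Finset.univ.filter (fun v => c ∈ A v)).card ∧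
        Y ⊆ Finset.univ.filter (fun v => c ∈ A v) := by
    intro Y; simp [hT]
  have hTne : T.Nonempty := by
    obtain ⟨c, hc⟩ := hex
    obtain ⟨Y, hYsub, hYcard⟩ := Finset.exists_subset_card_eq hc
    exact ⟨Y, (hmemT Y).mpr ⟨hYcard, c, hc, hYsub⟩⟩
  obtain ⟨Y₀, hY₀T, hminT⟩ := T.exists_min_image (avgSat A W) hTne
  obtain ⟨hY₀card, c₀, hc₀, hY₀sub⟩ := (hmemT Y₀).mp hY₀T
  set μ := avgSat A W Y₀ with hμ
  have hceil : (n : ℝ) / k ≤ (s : ℝ) := by rw [hs]; exact Nat.le_ceil _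
  have havg : ∀ Y : Finset V, Y.card = s →
      avgSat A W Y = (∑ v ∈ Y, ((A v ∩ W).card : ℝ)) / s := by
    intro Y hY; rw [avgSat, hY]
  refine ⟨μ, ⟨⟨Y₀, ?_, rfl⟩, ?_⟩, ⟨⟨c₀, hc₀, ⟨Y₀, hY₀sub, hY₀card, rfl⟩, ?_⟩, ?_⟩⟩
  · -- Y₀ is cohesive
    constructor
    · rw [hY₀card]; push_cast; rw [one_mul]; exact hceil
    · refine Finset.card_pos.mpr ⟨c₀, ?_⟩
      simp only [Finset.mem_filter, Finset.mem_univ, true_and]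
      intro v hv
      have := hY₀sub hv
      simpa using this
  · -- μ is a lower bound for cohesive-group averages
    rintro q ⟨X, ⟨hX1, hX2⟩, rfl⟩
    have hXs : s ≤ X.card := by
      rw [hs]
      exact Nat.ceil_le.mpr (by push_cast at hX1; rw [one_mul] at hX1; exact hX1)
    obtain ⟨c, hc⟩ := Finset.card_pos.mp (lt_of_lt_of_le Nat.one_pos hX2)
    simp only [Finset.mem_filter, Finset.mem_univ, true_and] at hc
    have hXsub : X ⊆ Finset.univ.filter (fun v => c ∈ A v) := by
      intro v hv; simp only [Finset.mem_filter, Finset.mem_univ, true_and]; exact hc v hv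
    obtain ⟨Y, hYX, hYcard, hle⟩ := min_avg_subset (fun v => ((A v ∩ W).card : ℝ))
      (fun v => Nat.cast_nonneg _) X s hXs
    have hYT : Y ∈ T := (hmemT Y).mpr ⟨hYcard, c,
      le_trans hXs (Finset.card_le_card hXsub), hYX.trans hXsub⟩
    calc μ ≤ avgSat A W Y := hminT Y hYT
      _ = (∑ v ∈ Y, ((A v ∩ W).card : ℝ)) / s := havg Y hYcard
      _ ≤ (∑ v ∈ X, ((A v ∩ W).card : ℝ)) / X.card := hle
      _ = avgSat A W X := rfl
  · -- μ is a lower bound on the inner set for c₀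
    rintro r ⟨Y, hYsub, hYcard, rfl⟩
    exact hminT Y ((hmemT Y).mpr ⟨hYcard, c₀, hc₀, hYsub⟩)
  · -- μ is a lower bound on the sat(c) values
    rintro q ⟨c, hc, hqmem, _⟩
    obtain ⟨Y, hYsub, hYcard, rfl⟩ := hqmem
    exact hminT Y ((hmemT Y).mpr ⟨hYcard, c, hc, hYsub⟩)
end

section
/- Let k be a positive integer, let U be a set of 3k elements, and let 𝒮 = {S_1, …, S_{3k}} be a family of size-3 subsets of U such that every element of U belongs to exactly three sets of 𝒮. Consider the approval election whose candidates are S_1, …, S_{3k} and whose voters are the elements of U, where voter u approves candidate S_j if and only if u ∈ S_j, with committee size k. Then this election has no ℓ-cohesive group for any ℓ ≥ 2, and every 1-cohesive group consists of exactly three voters, all of whom approve a common candidate. -/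
theorem stmt10 {U : Type*} [Fintype U] [DecidableEq U] (k : ℕ) (hk : 0 < k)
    (hU : Fintype.card U = 3 * k)
    (S : Fin (3 * k) → Finset U) (h3 : ∀ j, (S j).card = 3)
    (hcover : ∀ u : U, (Finset.univ.filter (fun j => u ∈ S j)).card = 3)
    (A : U → Finset (Fin (3 * k)))
    (hA : ∀ u : U, A u = Finset.univ.filter (fun j => u ∈ S j)) :
    (∀ ℓ : ℕ, 2 ≤ ℓ → ∀ X : Finset U, ¬ IsCohesive A (Fintype.card U) k ℓ X) ∧
      ∀ X : Finset U, IsCohesive A (Fintype.card U) k 1 X →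
        X.card = 3 ∧ ∃ j, ∀ u ∈ X, u ∈ S j := by
  -- key lemma: cohesiveness gives 3ℓ ≤ |X| and a common candidate j with X ⊆ S j
  have key : ∀ (ℓ : ℕ) (X : Finset U), 1 ≤ ℓ → IsCohesive A (Fintype.card U) k ℓ X →
      3 * ℓ ≤ X.card ∧ ∃ j, ∀ u ∈ X, u ∈ S j := by
    intro ℓ X hℓ ⟨hsize, hcand⟩
    have hk' : (k : ℝ) ≠ 0 := Nat.cast_ne_zero.mpr hk.ne'
    have hsize' : (3 * ℓ : ℝ) ≤ X.card := by
      rw [hU] at hsize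
      have : (ℓ : ℝ) * (3 * k) / k = 3 * ℓ := by field_simp
      rw [Nat.cast_mul, Nat.cast_ofNat] at hsize
      linarith [this ▸ hsize]
    have h1 : 3 * ℓ ≤ X.card := by exact_mod_cast hsize'
    obtain ⟨j, hj⟩ := Finset.card_pos.mp (lt_of_lt_of_le (by omega : 0 < ℓ) hcand)
    simp only [Finset.mem_filter] at hj
    refine ⟨h1, j, fun u hu => ?_⟩
    have := hj.2 u hu
    rw [hA u, Finset.mem_filter] at this
    exact this.2
  constructor
  · intro ℓ hℓ X hcoh
    obtain ⟨h1, j, hj⟩ := key ℓ X (by omega) hcoh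
    have hsub : X ⊆ S j := fun u hu => hj u hu
    have := Finset.card_le_card hsub
    rw [h3 j] at this
    omega
  · intro X hcoh
    obtain ⟨h1, j, hj⟩ := key 1 X le_rfl hcoh
    have hsub : X ⊆ S j := fun u hu => hj u hu
    have := Finset.card_le_card hsub
    rw [h3 j] at this
    exact ⟨by omega, j, hj⟩
end

section
/- Let k be a positive integer, let U be a set of 3k elements, and let 𝒮 = {S_1, …, S_{3k}} be a family of size-3 subsets of U such that every element of U belongs to exactly three sets of 𝒮. Consider the approval election whose candidates are S_1, …, S_{3k} and whose voters are the elements of U, where voter u approves candidate S_j if and only if u ∈ S_j, with committee size k. Then there exist k sets in 𝒮 whose union equals U if and only if there exists a committee W of k candidates such that every 1-cohesive group of the election has average satisfaction with W at least 1. -/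
lemma all_eq_of_sum_eq {α : Type*} (s : Finset α) (f : α → ℕ) (c : ℕ)
    (hle : ∀ i ∈ s, c ≤ f i) (hsum : ∑ i ∈ s, f i = s.card * c) :
    ∀ i ∈ s, f i = c := by
  by_contra hcon
  push_neg at hcon
  obtain ⟨i, hi, hne⟩ := hcon
  have hlt : c < f i := lt_of_le_of_ne (hle i hi) (Ne.symm hne)
  have h : ∑ _ ∈ s, c < ∑ i ∈ s, f i :=
    Finset.sum_lt_sum (fun j hj => hle j hj) ⟨i, hi, hlt⟩
  rw [Finset.sum_const, smul_eq_mul, hsum] at h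
  exact lt_irrefl _ h

theorem stmt11 {U : Type*} [Fintype U] [DecidableEq U] (k : ℕ) (hk : 0 < k)
    (hU : Fintype.card U = 3 * k)
    (S : Fin (3 * k) → Finset U) (h3 : ∀ j, (S j).card = 3)
    (hcover : ∀ u : U, (Finset.univ.filter (fun j => u ∈ S j)).card = 3)
    (A : U → Finset (Fin (3 * k)))
    (hA : ∀ u : U, A u = Finset.univ.filter (fun j => u ∈ S j)) :
    (∃ T : Finset (Fin (3 * k)), T.card = k ∧ T.biUnion S = Finset.univ) ↔
      ∃ W : Finset (Fin (3 * k)), W.card = k ∧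
        ∀ X : Finset U, IsCohesive A (Fintype.card U) k 1 X → 1 ≤ avgSat A W X := by
  have hk' : (k : ℝ) ≠ 0 := Nat.cast_ne_zero.mpr hk.ne'
  have hn3 : (1 : ℝ) * (Fintype.card U) / k = 3 := by
    rw [hU]; push_cast; field_simp
  constructor
  · rintro ⟨T, hTcard, hTun⟩
    refine ⟨T, hTcard, fun X hX => ?_⟩
    have h3le : (3 : ℝ) ≤ X.card := by
      have := hX.1
      rw [Nat.cast_one, hn3] at this
      exact this
    have hpos : (0 : ℝ) < X.card := by linarith
    rw [avgSat, one_le_div hpos]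
    have hterm : ∀ v ∈ X, (1 : ℝ) ≤ ((A v ∩ T).card : ℝ) := by
      intro v _
      have hne : (A v ∩ T).Nonempty := by
        have hv : v ∈ T.biUnion S := hTun ▸ Finset.mem_univ v
        obtain ⟨j, hjT, hvj⟩ := Finset.mem_biUnion.mp hv
        exact ⟨j, Finset.mem_inter.mpr ⟨by simp [hA, hvj], hjT⟩⟩
      exact_mod_cast Finset.card_pos.mpr hne
    calc (X.card : ℝ) = ∑ _ ∈ X, (1 : ℝ) := by simp
      _ ≤ ∑ v ∈ X, ((A v ∩ T).card : ℝ) := Finset.sum_le_sum hterm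
  · rintro ⟨W, hWcard, hW⟩
    set sat : U → ℕ := fun u => (A u ∩ W).card with hsat
    have hAW : ∀ u, A u ∩ W = W.filter (fun j => u ∈ S j) := by
      intro u; rw [hA]; ext j
      simp [Finset.mem_filter, Finset.mem_inter, and_comm]
    have hmemA : ∀ (u : U) (j : Fin (3 * k)), j ∈ A u ↔ u ∈ S j := by
      intro u j; simp [hA]
    -- each S j is a 1-cohesive group
    have hcoh : ∀ j, IsCohesive A (Fintype.card U) k 1 (S j) := by
      intro j
      constructor
      · rw [Nat.cast_one, hn3, h3]; norm_num
      · refine Finset.card_pos.mpr ⟨j, ?_⟩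
        simp only [Finset.mem_filter, Finset.mem_univ, true_and]
        intro v hv; exact (hmemA v j).mpr hv
    -- satisfaction sum over each S j is at least 3
    have hj3 : ∀ j, 3 ≤ ∑ v ∈ S j, sat v := by
      intro j
      have h1 := hW (S j) (hcoh j)
      have hcpos : (0 : ℝ) < ((S j).card : ℝ) := by rw [h3]; norm_num
      rw [avgSat, one_le_div hcpos, h3] at h1
      have : (3 : ℝ) ≤ ((∑ v ∈ S j, sat v : ℕ) : ℝ) := by push_cast; exact_mod_cast h1
      exact_mod_cast this
    -- total satisfaction is 3k
    have hsum1 : ∑ u : U, sat u = 3 * k := by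
      have h1 : ∑ u : U, sat u = ∑ j ∈ W, (S j).card := by
        simp only [hsat, hAW, Finset.card_filter]
        rw [Finset.sum_comm]
        refine Finset.sum_congr rfl fun j _ => ?_
        rw [← Finset.card_filter]
        congr 1
        ext u; simp
      rw [h1]
      have : ∑ j ∈ W, (S j).card = ∑ _ ∈ W, 3 := Finset.sum_congr rfl fun j _ => h3 j
      rw [this, Finset.sum_const, smul_eq_mul, hWcard]; ring
    -- double-counted total
    have hsum2 : ∑ j : Fin (3 * k), ∑ v ∈ S j, sat v = (Finset.univ : Finset (Fin (3 * k))).card * 3 := by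
      have h1 : ∀ j : Fin (3 * k), ∑ v ∈ S j, sat v = ∑ v : U, if v ∈ S j then sat v else 0 := by
        intro j
        rw [Finset.sum_ite_mem]
        congr 1
        simp
      calc ∑ j : Fin (3 * k), ∑ v ∈ S j, sat v
          = ∑ j : Fin (3 * k), ∑ v : U, if v ∈ S j then sat v else 0 :=
            Finset.sum_congr rfl fun j _ => h1 j
        _ = ∑ v : U, ∑ j : Fin (3 * k), if v ∈ S j then sat v else 0 := Finset.sum_comm
        _ = ∑ v : U, 3 * sat v := by
            refine Finset.sum_congr rfl fun v _ => ?_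
            rw [← Finset.sum_filter, Finset.sum_const, smul_eq_mul, hcover]
        _ = 3 * ∑ v : U, sat v := by rw [Finset.mul_sum]
        _ = (Finset.univ : Finset (Fin (3 * k))).card * 3 := by
            rw [hsum1, Finset.card_univ, Fintype.card_fin]; ring
    -- hence each set's satisfaction sum is exactly 3
    have heq3 : ∀ j : Fin (3 * k), ∑ v ∈ S j, sat v = 3 := by
      intro j
      exact all_eq_of_sum_eq Finset.univ (fun j => ∑ v ∈ S j, sat v) 3
        (fun j _ => hj3 j) hsum2 j (Finset.mem_univ j)
    -- every covered voter has satisfaction exactly 1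
    have hone : ∀ j ∈ W, ∀ v ∈ S j, sat v = 1 := by
      intro j hjW
      refine all_eq_of_sum_eq (S j) sat 1 ?_ ?_
      · intro v hv
        have : j ∈ A v ∩ W := Finset.mem_inter.mpr ⟨(hmemA v j).mpr hv, hjW⟩
        exact Finset.card_pos.mpr ⟨j, this⟩
      · rw [heq3, h3]
    -- the covered set
    set Cov : Finset U := Finset.univ.filter (fun u => (A u ∩ W).Nonempty) with hCov
    have hcov1 : ∀ u ∈ Cov, sat u = 1 := by
      intro u hu
      simp only [hCov, Finset.mem_filter] at hu
      obtain ⟨j, hj⟩ := hu.2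
      obtain ⟨hjA, hjW⟩ := Finset.mem_inter.mp hj
      exact hone j hjW u ((hmemA u j).mp hjA)
    have hcov0 : ∀ u ∈ (Finset.univ \ Cov), sat u = 0 := by
      intro u hu
      simp only [hCov, Finset.mem_sdiff, Finset.mem_filter, Finset.mem_univ, true_and,
        Finset.not_nonempty_iff_eq_empty] at hu
      simp [hsat, hu]
    have hsplit : ∑ u : U, sat u = Cov.card := by
      have hsub : Cov ⊆ Finset.univ := Finset.subset_univ _
      rw [← Finset.sum_sdiff hsub, Finset.sum_eq_zero hcov0, zero_add,
        Finset.sum_congr rfl hcov1, Finset.sum_const, smul_eq_mul, mul_one]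
    have hcard : Cov.card = Fintype.card U := by rw [← hsplit, hsum1, hU]
    have hCovuniv : Cov = Finset.univ := Finset.eq_univ_of_card Cov hcard
    refine ⟨W, hWcard, ?_⟩
    rw [Finset.eq_univ_iff_forall]
    intro u
    have hu : u ∈ Cov := hCovuniv ▸ Finset.mem_univ u
    simp only [hCov, Finset.mem_filter] at hu
    obtain ⟨j, hj⟩ := hu.2
    obtain ⟨hjA, hjW⟩ := Finset.mem_inter.mp hj
    exact Finset.mem_biUnion.mpr ⟨j, hjW, (hmemA u j).mp hjA⟩
end

section
/- Let E be an approval election with n voters, let k be the committee size, let W be a committee of size k, let ℓ be a positive integer, and let y be a real number. If E contains an ℓ-cohesive group whose average satisfaction with W is strictly less than y, then E contains an ℓ-cohesive group of size exactly ⌈ℓ·n/k⌉ whose average satisfaction with W is strictly less than y. -/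
lemma erase_avg_le {V : Type*} [DecidableEq V] (f : V → ℝ) (hf : ∀ v, 0 ≤ f v)
    (X : Finset V) (hX : 2 ≤ X.card) :
    ∃ v ∈ X, (∑ w ∈ X.erase v, f w) / ((X.erase v).card : ℝ)
      ≤ (∑ w ∈ X, f w) / (X.card : ℝ) := by
  have hne : X.Nonempty := Finset.card_pos.mp (by omega)
  obtain ⟨v, hv, hmax⟩ := X.exists_max_image f hne
  refine ⟨v, hv, ?_⟩
  have hsum : ∑ w ∈ X, f w ≤ X.card • f v := Finset.sum_le_card_nsmul _ _ _ (fun w hw => hmax w hw)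
  rw [nsmul_eq_mul] at hsum
  have hcard : (X.erase v).card = X.card - 1 := Finset.card_erase_of_mem hv
  have hsum' : ∑ w ∈ X.erase v, f w = (∑ w ∈ X, f w) - f v := by
    rw [Finset.sum_erase_eq_sub hv]
  rw [hsum', hcard]
  have hc : (2:ℝ) ≤ (X.card : ℝ) := by exact_mod_cast hX
  have hc1 : (0:ℝ) < (X.card : ℝ) - 1 := by linarith
  have hcast : ((X.card - 1 : ℕ) : ℝ) = (X.card : ℝ) - 1 := by
    have : 1 ≤ X.card := by omega
    push_cast [this]; ring
  rw [hcast, div_le_div_iff₀ hc1 (by linarith)]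
  nlinarith [hf v]

lemma exists_subset_avg_le {V : Type*} [DecidableEq V] (f : V → ℝ) (hf : ∀ v, 0 ≤ f v)
    (m : ℕ) (hm : 1 ≤ m) :
    ∀ d : ℕ, ∀ X : Finset V, X.card = m + d →
      ∃ Y ⊆ X, Y.card = m ∧
        (∑ w ∈ Y, f w) / (Y.card : ℝ) ≤ (∑ w ∈ X, f w) / (X.card : ℝ) := by
  intro d
  induction d with
  | zero => intro X hX; exact ⟨X, Finset.Subset.refl X, by omega, le_refl _⟩
  | succ d ih =>
    intro X hX
    obtain ⟨v, hv, hle⟩ := erase_avg_le f hf X (by omega)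
    have hcard : (X.erase v).card = m + d := by
      rw [Finset.card_erase_of_mem hv]; omega
    obtain ⟨Y, hYsub, hYcard, hYle⟩ := ih (X.erase v) hcard
    exact ⟨Y, hYsub.trans (Finset.erase_subset v X), hYcard, hYle.trans hle⟩

theorem stmt13 {V C : Type*} [Fintype V] [Fintype C] [DecidableEq V] [DecidableEq C]
    (A : V → Finset C) (k ℓ : ℕ) (hk : 0 < k) (hℓ : 0 < ℓ)
    (W : Finset C) (hW : W.card = k) (y : ℝ)
    (h : ∃ X : Finset V, IsCohesive A (Fintype.card V) k ℓ X ∧ avgSat A W X < y) :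
    ∃ X : Finset V, IsCohesive A (Fintype.card V) k ℓ X ∧
      X.card = ⌈(ℓ : ℝ) * Fintype.card V / k⌉₊ ∧ avgSat A W X < y := by
  obtain ⟨X, ⟨hX1, hX2⟩, hXy⟩ := h
  set n := Fintype.card V with hn
  set m := ⌈(ℓ : ℝ) * n / k⌉₊ with hm
  by_cases hn0 : n = 0
  · refine ⟨X, ⟨hX1, hX2⟩, ?_, hXy⟩
    have hXcard : X.card = 0 := by
      have := Finset.card_le_card (Finset.subset_univ X)
      simp [Finset.card_univ, ← hn, hn0] at this
      simp [this]
    have : m = 0 := by simp [hm, hn0]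
    omega
  · have hnpos : 0 < n := Nat.pos_of_ne_zero hn0
    have hpos : (0:ℝ) < (ℓ : ℝ) * n / k := by
      apply div_pos (by positivity) (by exact_mod_cast hk)
    have hm1 : 1 ≤ m := by
      rw [hm]; exact Nat.one_le_iff_ne_zero.mpr (by
        simp only [ne_eq, Nat.ceil_eq_zero, not_le]; exact hpos)
    have hmX : m ≤ X.card := Nat.ceil_le.mpr hX1
    obtain ⟨Y, hYsub, hYcard, hYle⟩ := exists_subset_avg_le
      (fun v => ((A v ∩ W).card : ℝ)) (fun v => by positivity) m hm1
      (X.card - m) X (by omega)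
    refine ⟨Y, ⟨?_, ?_⟩, hYcard, lt_of_le_of_lt hYle hXy⟩
    · rw [hYcard]; exact Nat.le_ceil _
    · refine le_trans hX2 (Finset.card_le_card ?_)
      intro c hc
      simp only [Finset.mem_filter, Finset.mem_univ, true_and] at hc ⊢
      exact fun v hv => hc v (hYsub hv)
end

section
/- Let E be an approval election with voters v_1, …, v_n that has voter interval (VI) preferences with respect to this ordering, let k be the committee size, let ℓ be a positive integer, and let x be an integer with x ≥ ⌈ℓ·n/k⌉. Fix an index i with 1 ≤ i ≤ n. If |A(v_i)| < ℓ, then there is no ℓ-cohesive group of size x whose minimum-index voter is v_i. Otherwise, let j be the largest index such that |A(v_i) ∩ A(v_j)| ≥ ℓ; then the number of ℓ-cohesive groups of size exactly x whose minimum-index voter is v_i equals the binomial coefficient C(j − i, x − 1). -/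
theorem stmt17 {C : Type*} [Fintype C] [DecidableEq C] (n : ℕ)
    (A : Fin n → Finset C)
    (hVI : ∀ c : C, ∀ a b d : Fin n, a ≤ b → b ≤ d → c ∈ A a → c ∈ A d → c ∈ A b)
    (k ℓ x : ℕ) (hk : 0 < k) (hℓ : 0 < ℓ)
    (hx : ⌈(ℓ : ℝ) * n / k⌉₊ ≤ x) (i : Fin n) :
    ((A i).card < ℓ →
      {X : Finset (Fin n) | IsCohesive A n k ℓ X ∧ X.card = x ∧
        i ∈ X ∧ ∀ v ∈ X, i ≤ v}.ncard = 0) ∧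
      ∀ j : Fin n,
        (ℓ ≤ (A i ∩ A j).card ∧ ∀ j' : Fin n, ℓ ≤ (A i ∩ A j').card → j' ≤ j) →
        {X : Finset (Fin n) | IsCohesive A n k ℓ X ∧ X.card = x ∧
          i ∈ X ∧ ∀ v ∈ X, i ≤ v}.ncard = Nat.choose ((j : ℕ) - (i : ℕ)) (x - 1) := by
  classical
  have hn : 0 < n := i.pos
  have hx1 : 1 ≤ x := le_trans (Nat.one_le_ceil_iff.mpr (by positivity)) hx
  constructor
  · intro hlt
    convert Set.ncard_empty (Finset (Fin n))
    ext X
    simp only [Set.mem_setOf_eq, Set.mem_empty_iff_false, iff_false]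
    rintro ⟨⟨-, hcoh⟩, hcard, hiX, hmin⟩
    rw [Finset.filter_congr_decidable] at hcoh
    refine absurd (le_trans hcoh (Finset.card_le_card ?_)) (not_le.mpr hlt)
    intro c hc
    exact (Finset.mem_filter.mp hc).2 i hiX
  · rintro j ⟨hj, hjmax⟩
    have hinotIoc : i ∉ Finset.Ioc i j := by simp
    have hset : {X : Finset (Fin n) | IsCohesive A n k ℓ X ∧ X.card = x ∧
          i ∈ X ∧ ∀ v ∈ X, i ≤ v} =
        ↑(((Finset.Ioc i j).powersetCard (x-1)).image (insert i)) := by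
      ext X
      simp only [Finset.coe_image, Set.mem_image, Finset.mem_coe,
        Finset.mem_powersetCard, Set.mem_setOf_eq]
      constructor
      · rintro ⟨⟨-, hcoh⟩, hcard, hiX, hmin⟩
        rw [Finset.filter_congr_decidable] at hcoh
        refine ⟨X.erase i, ⟨?_, ?_⟩, Finset.insert_erase hiX⟩
        · intro v hv
          obtain ⟨hne, hvX⟩ := Finset.mem_erase.mp hv
          have hij : i < v := lt_of_le_of_ne (hmin v hvX) (Ne.symm hne)
          refine Finset.mem_Ioc.mpr ⟨hij, hjmax v (le_trans hcoh (Finset.card_le_card ?_))⟩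
          intro c hc
          have h := (Finset.mem_filter.mp hc).2
          exact Finset.mem_inter.mpr ⟨h i hiX, h v hvX⟩
        · rw [Finset.card_erase_of_mem hiX, hcard]
      · rintro ⟨S, ⟨hS, hScard⟩, rfl⟩
        have hiS : i ∉ S := fun h => hinotIoc (hS h)
        have hcard : (insert i S).card = x := by
          rw [Finset.card_insert_of_notMem hiS, hScard]
          omega
        refine ⟨⟨by rw [hcard]; exact Nat.ceil_le.mp hx, ?_⟩,
          hcard, Finset.mem_insert_self i S, ?_⟩
        · rw [Finset.filter_congr_decidable]
          refine le_trans hj (Finset.card_le_card ?_)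
          intro c hc
          obtain ⟨hci, hcj⟩ := Finset.mem_inter.mp hc
          refine Finset.mem_filter.mpr ⟨Finset.mem_univ c, ?_⟩
          intro v hv
          rcases Finset.mem_insert.mp hv with rfl | hvS
          · exact hci
          · obtain ⟨h1, h2⟩ := Finset.mem_Ioc.mp (hS hvS)
            exact hVI c i v j h1.le h2 hci hcj
        · intro v hv
          rcases Finset.mem_insert.mp hv with rfl | hvS
          · exact le_refl v
          · exact (Finset.mem_Ioc.mp (hS hvS)).1.le
    rw [hset, Set.ncard_coe_finset]
    rw [Finset.card_image_of_injOn, Finset.card_powersetCard]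
    · congr 1
      simp [Nat.card_Ioc]
    · intro S hS T hT h
      simp only [Finset.mem_coe, Finset.mem_powersetCard] at hS hT
      have hiS : i ∉ S := fun hm => hinotIoc (hS.1 hm)
      have hiT : i ∉ T := fun hm => hinotIoc (hT.1 hm)
      rw [← Finset.erase_insert hiS, ← Finset.erase_insert hiT, h]
end

section
/- Let E be an approval election with n voters and candidates c_1, …, c_m that has candidate interval (CI) preferences with respect to this ordering, let k be the committee size, let ℓ be a positive integer, and let x be an integer with x ≥ ⌈ℓ·n/k⌉. Fix an index j with 1 ≤ j ≤ m − ℓ + 1. Let L₂ be the set of voters who approve all of the candidates c_j, …, c_{j+ℓ−1} and approve no candidate c_p with p < j, and let L₁ be the set of voters who approve all of the candidates c_j, …, c_{j+ℓ−1} and approve at least one candidate c_p with p < j. Then the number of ℓ-cohesive groups of size exactly x for which c_j is the smallest-index candidate approved by all members of the group equals Σ_{t=1}^{min(|L₂|, x)} C(|L₂|, t) · C(|L₁|, x − t), where C(·,·) denotes the binomial coefficient. -/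
/-!
Since approval sets are intervals, a group whose members all approve `c_j` but have no common
approved candidate before `c_j` has as common approvals an interval starting at `c_j`; it is
`ℓ`-cohesive exactly when every member approves `c_j, …, c_{j+ℓ-1}`, i.e. lies in `L₁ ∪ L₂`.
Moreover some member must reject `c_{j-1}`, and such a member approves nothing before `c_j`,
i.e. lies in `L₂`. The groups to count are therefore the `x`-subsets of the disjoint union
`L₁ ∪ L₂` meeting `L₂`, and sorting them by `t = |X ∩ L₂|` gives the sum.
-/

/-- `X` is an `ℓ`-cohesive group in the approval election whose candidates are
`c_1, …, c_m`, identified with `0, …, m-1 : ℕ`, with approval function `A`,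
`n` voters and committee size `k`: `|X| ≥ ℓ·n/k` and at least `ℓ` candidates
are approved by every member of `X`. -/
def IsCohesiveN {V : Type*} (m : ℕ) (A : V → Finset ℕ) (n k ℓ : ℕ) (X : Finset V) : Prop :=
  (ℓ : ℝ) * n / k ≤ X.card ∧
    ℓ ≤ ((Finset.range m).filter (fun c => ∀ v ∈ X, c ∈ A v)).card

open Finset

namespace Finset

variable {α : Type*} [DecidableEq α] {P Q : Finset α}

theorem card_filter_powersetCard_union_card_inter_eq (h : Disjoint P Q) {x t : ℕ}
    (ht : t ≤ x) :
    #{X ∈ powersetCard x (P ∪ Q) | #(X ∩ P) = t} = (#P).choose t * (#Q).choose (x - t) := by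
  rw [← card_powersetCard, ← card_powersetCard, ← card_product]
  have inter_union_inter {X : Finset α} (hX : X ⊆ P ∪ Q) : X ∩ P ∪ X ∩ Q = X := by
    rw [← inter_union_distrib_left, inter_eq_left.2 hX]
  have inter_left {S T : Finset α} (hS : S ⊆ P) (hT : T ⊆ Q) : (S ∪ T) ∩ P = S := by
    rw [union_inter_distrib_right, inter_eq_left.2 hS,
      disjoint_iff_inter_eq_empty.1 (h.symm.mono_left hT), union_empty]
  have inter_right {S T : Finset α} (hS : S ⊆ P) (hT : T ⊆ Q) : (S ∪ T) ∩ Q = T := by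
    rw [union_inter_distrib_right, inter_eq_left.2 hT,
      disjoint_iff_inter_eq_empty.1 (h.mono_left hS), empty_union]
  refine card_nbij' (fun X => (X ∩ P, X ∩ Q)) (fun S => S.1 ∪ S.2) ?_ ?_ ?_ ?_
  · intro X hX
    simp only [mem_coe, mem_filter, mem_powersetCard] at hX
    obtain ⟨⟨hXPQ, hXcard⟩, hXP⟩ := hX
    have hcard : #(X ∩ P) + #(X ∩ Q) = #X := by
      rw [← card_union_of_disjoint (h.mono inter_subset_right inter_subset_right),
        inter_union_inter hXPQ]
    simp only [mem_coe, mem_product, mem_powersetCard]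
    exact ⟨⟨inter_subset_right, hXP⟩, inter_subset_right, by omega⟩
  · rintro ⟨S, T⟩ hST
    simp only [mem_coe, mem_product, mem_powersetCard] at hST
    obtain ⟨⟨hS, hScard⟩, hT, hTcard⟩ := hST
    simp only [mem_coe, mem_filter, mem_powersetCard, inter_left hS hT]
    refine ⟨⟨union_subset_union hS hT, ?_⟩, hScard⟩
    rw [card_union_of_disjoint (h.mono hS hT)]
    omega
  · intro X hX
    simp only [mem_coe, mem_filter, mem_powersetCard] at hX
    exact inter_union_inter hX.1.1
  · rintro ⟨S, T⟩ hST
    simp only [mem_coe, mem_product, mem_powersetCard] at hST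
    exact Prod.ext (inter_left hST.1.1 hST.2.1) (inter_right hST.1.1 hST.2.1)

theorem card_filter_powersetCard_union_inter_nonempty (h : Disjoint P Q) (x : ℕ) :
    #{X ∈ powersetCard x (P ∪ Q) | (X ∩ P).Nonempty} =
      ∑ t ∈ Icc 1 (min #P x), (#P).choose t * (#Q).choose (x - t) := by
  rw [card_eq_sum_card_fiberwise (f := fun X => #(X ∩ P)) (t := Icc 1 (min #P x))]
  · refine sum_congr rfl fun t ht => ?_
    rw [mem_Icc, le_min_iff] at ht
    rw [filter_filter, ← card_filter_powersetCard_union_card_inter_eq h ht.2.2]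
    congr 1
    refine filter_congr fun X _ => ⟨And.right, fun hXt => ⟨?_, hXt⟩⟩
    rw [← card_pos, hXt]
    exact ht.1
  · intro X hX
    simp only [mem_coe, mem_filter, mem_powersetCard] at hX
    obtain ⟨⟨-, hXcard⟩, hXP⟩ := hX
    simp only [coe_Icc, Set.mem_Icc, le_min_iff]
    exact ⟨hXP.card_pos, card_le_card inter_subset_right, hXcard ▸ card_le_card inter_subset_left⟩

end Finset

def CandidateInterval {V : Type*} (A : V → Finset ℕ) : Prop :=
  ∀ v, ∀ a b c : ℕ, a ≤ b → b ≤ c → a ∈ A v → c ∈ A v → b ∈ A v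

namespace CandidateInterval

variable {V : Type*} {A : V → Finset ℕ} (hCI : CandidateInterval A) {X : Finset V} {j ℓ m : ℕ}
include hCI

theorem forall_lt_exists_notMem_iff (hX : X.Nonempty) (hjX : ∀ v ∈ X, j ∈ A v) :
    (∀ p < j, ∃ v ∈ X, p ∉ A v) ↔ ∃ v ∈ X, ∀ p < j, p ∉ A v := by
  refine ⟨fun hmin => ?_, fun ⟨v, hv, hvA⟩ p hp => ⟨v, hv, hvA p hp⟩⟩
  rcases j.eq_zero_or_pos with rfl | hj
  · obtain ⟨v, hv⟩ := hX
    exact ⟨v, hv, fun p hp => absurd hp p.not_lt_zero⟩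
  · obtain ⟨v, hv, hvA⟩ := hmin (j - 1) (by omega)
    exact ⟨v, hv, fun p hp hpA => hvA (hCI v p (j - 1) j (by omega) (by omega) hpA (hjX v hv))⟩

theorem le_card_commonApprovals_iff (hjm : j + ℓ ≤ m) (hjX : ∀ v ∈ X, j ∈ A v)
    (hmin : ∀ p < j, ∃ v ∈ X, p ∉ A v) :
    ℓ ≤ #{c ∈ range m | ∀ v ∈ X, c ∈ A v} ↔ ∀ v ∈ X, Ico j (j + ℓ) ⊆ A v := by
  constructor
  · intro hℓ
    obtain rfl | hℓ0 := ℓ.eq_zero_or_pos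
    · simp
    -- no common approval lies below `j`, so `ℓ` of them reach up to `j + ℓ - 1`
    obtain ⟨c, hc, hcj⟩ : ∃ c ∈ {c ∈ range m | ∀ v ∈ X, c ∈ A v}, j + ℓ - 1 ≤ c := by
      by_contra! hlt
      have hsub : {c ∈ range m | ∀ v ∈ X, c ∈ A v} ⊆ Ico j (j + ℓ - 1) := by
        intro c hc
        refine mem_Ico.2 ⟨not_lt.1 fun hcj => ?_, hlt c hc⟩
        obtain ⟨v, hv, hvc⟩ := hmin c hcj
        exact hvc ((mem_filter.1 hc).2 v hv)
      have := (card_le_card hsub).trans' hℓ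
      rw [Nat.card_Ico] at this
      omega
    intro v hv b hb
    rw [mem_Ico] at hb
    exact hCI v j b c hb.1 (by omega) (hjX v hv) ((mem_filter.1 hc).2 v hv)
  · intro happ
    calc ℓ = #(Ico j (j + ℓ)) := by simp
      _ ≤ _ := card_le_card fun c hc =>
        mem_filter.2 ⟨mem_range.2 (by rw [mem_Ico] at hc; omega), fun v hv => happ v hv hc⟩

theorem isCohesiveN_least_common_iff {n k x : ℕ} (hjm : j + ℓ ≤ m) (hℓ : 0 < ℓ)
    (hx : ⌈(ℓ : ℝ) * n / k⌉₊ ≤ x) (hx0 : 0 < x) :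
    (IsCohesiveN m A n k ℓ X ∧ #X = x ∧ (∀ v ∈ X, j ∈ A v) ∧ ∀ p < j, ∃ v ∈ X, p ∉ A v) ↔
      #X = x ∧ (∀ v ∈ X, Ico j (j + ℓ) ⊆ A v) ∧ ∃ v ∈ X, ∀ p < j, p ∉ A v := by
  constructor
  · rintro ⟨⟨-, hcommon⟩, hXx, hjX, hmin⟩
    have hX : X.Nonempty := card_pos.1 (hXx ▸ hx0)
    exact ⟨hXx, (le_card_commonApprovals_iff hCI hjm hjX hmin).1 hcommon,
      (forall_lt_exists_notMem_iff hCI hX hjX).1 hmin⟩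
  · rintro ⟨hXx, happ, v, hv, hvA⟩
    have hjX : ∀ v ∈ X, j ∈ A v := fun v hv => happ v hv (mem_Ico.2 ⟨le_rfl, by omega⟩)
    have hmin : ∀ p < j, ∃ v ∈ X, p ∉ A v := fun p hp => ⟨v, hv, hvA p hp⟩
    refine ⟨⟨?_, (le_card_commonApprovals_iff hCI hjm hjX hmin).2 happ⟩, hXx, hjX, hmin⟩
    rw [hXx]
    exact (Nat.le_ceil _).trans (by exact_mod_cast hx)

end CandidateInterval

theorem stmt18_general {V : Type*} [Fintype V] [Nonempty V] (m : ℕ)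
    (A : V → Finset ℕ)
    (hCI : ∀ v, ∀ a b c : ℕ, a ≤ b → b ≤ c → a ∈ A v → c ∈ A v → b ∈ A v)
    (k ℓ x : ℕ) (hk : 0 < k) (hℓ : 0 < ℓ)
    (hx : ⌈(ℓ : ℝ) * Fintype.card V / k⌉₊ ≤ x)
    (j : ℕ) (hj : j + ℓ ≤ m)
    (L₁ L₂ : Finset V)
    (hL₂ : L₂ = Finset.univ.filter
      (fun v => Finset.Ico j (j + ℓ) ⊆ A v ∧ ∀ p < j, p ∉ A v))
    (hL₁ : L₁ = Finset.univ.filter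
      (fun v => Finset.Ico j (j + ℓ) ⊆ A v ∧ ∃ p < j, p ∈ A v)) :
    {X : Finset V | IsCohesiveN m A (Fintype.card V) k ℓ X ∧ X.card = x ∧
        (∀ v ∈ X, j ∈ A v) ∧ ∀ p < j, ∃ v ∈ X, p ∉ A v}.ncard =
      ∑ t ∈ Finset.Icc 1 (min L₂.card x), Nat.choose L₂.card t * Nat.choose L₁.card (x - t) := by
  classical
  have hdisj : Disjoint L₂ L₁ := by
    rw [hL₁, hL₂, disjoint_filter]
    rintro v - h₂ ⟨-, p, hp, hpA⟩
    exact h₂.2 p hp hpA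
  have hunion : ∀ v, v ∈ L₂ ∪ L₁ ↔ Ico j (j + ℓ) ⊆ A v := by
    intro v
    by_cases h : ∃ p < j, p ∈ A v <;> simp_all
  have hx0 : 0 < x := (Nat.ceil_pos.2 (by positivity)).trans_le hx
  have hset : {X : Finset V | IsCohesiveN m A (Fintype.card V) k ℓ X ∧ X.card = x ∧
        (∀ v ∈ X, j ∈ A v) ∧ ∀ p < j, ∃ v ∈ X, p ∉ A v} =
      ↑{X ∈ powersetCard x (L₂ ∪ L₁) | (X ∩ L₂).Nonempty} := by
    ext X
    rw [Set.mem_ofPred_eq, CandidateInterval.isCohesiveN_least_common_iff hCI hj hℓ hx hx0]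
    simp only [Set.mem_ofPred_eq, coe_filter, mem_powersetCard, subset_iff, hunion]
    simp only [Finset.Nonempty, mem_inter, hL₂, mem_filter, mem_univ, true_and]
    constructor
    · rintro ⟨hXx, happ, v, hv, hvA⟩
      exact ⟨⟨happ, hXx⟩, v, hv, happ v hv, hvA⟩
    · rintro ⟨⟨happ, hXx⟩, v, hv, -, hvA⟩
      exact ⟨hXx, happ, v, hv, hvA⟩
  rw [hset, Set.ncard_coe_finset, card_filter_powersetCard_union_inter_nonempty hdisj]

theorem stmt18 {V : Type*} [Fintype V] [DecidableEq V] [Nonempty V] (m : ℕ)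
    (A : V → Finset ℕ)
    (hrange : ∀ v, A v ⊆ Finset.range m)
    (hCI : ∀ v, ∀ a b c : ℕ, a ≤ b → b ≤ c → a ∈ A v → c ∈ A v → b ∈ A v)
    (k ℓ x : ℕ) (hk : 0 < k) (hℓ : 0 < ℓ)
    (hx : ⌈(ℓ : ℝ) * Fintype.card V / k⌉₊ ≤ x)
    (j : ℕ) (hj : j + ℓ ≤ m)
    (L₁ L₂ : Finset V)
    (hL₂ : L₂ = Finset.univ.filter
      (fun v => Finset.Ico j (j + ℓ) ⊆ A v ∧ ∀ p < j, p ∉ A v))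
    (hL₁ : L₁ = Finset.univ.filter
      (fun v => Finset.Ico j (j + ℓ) ⊆ A v ∧ ∃ p < j, p ∈ A v)) :
    {X : Finset V | IsCohesiveN m A (Fintype.card V) k ℓ X ∧ X.card = x ∧
        (∀ v ∈ X, j ∈ A v) ∧ ∀ p < j, ∃ v ∈ X, p ∉ A v}.ncard =
      ∑ t ∈ Finset.Icc 1 (min L₂.card x), Nat.choose L₂.card t * Nat.choose L₁.card (x - t) :=
  stmt18_general m A hCI k ℓ x hk hℓ hx j hj L₁ L₂ hL₂ hL₁
end
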